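/- Let K be a real number with 0 < K < 1, let r_K(z) = z³ + z - 2K, and let ν₀ be the unique positive real root of r_K. Let λ, μ be real numbers in (0,1) with λ + μ > 1. Then (λ,μ) belongs to Θ if and only if K/(λ+μ-1) - (1-λ)(1-μ) < λμ, where Θ is the set of pairs (λ,μ) ∈ (0,1)² satisfying ν₀ + 1 ≤ λ + μ < 2 and |λ - μ| < min{ 2 - λ - μ, √( r_K(λ+μ-1)/(λ+μ-1) ) }. -/
import Mathlib


/-- The polynomial `r_K(z) = z³ + z - 2K`. -/
def rK (K z : ℝ) : ℝ := z ^ 3 + z - 2 * K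

/-- The set `Θ` of pairs `(λ,μ) ∈ (0,1)²` with `ν₀ + 1 ≤ λ + μ < 2` and
`|λ - μ| < min { 2 - λ - μ, √(r_K(λ+μ-1)/(λ+μ-1)) }`. -/
noncomputable def Theta (K ν : ℝ) : Set (ℝ × ℝ) :=
  {p | p.1 ∈ Set.Ioo (0 : ℝ) 1 ∧ p.2 ∈ Set.Ioo (0 : ℝ) 1 ∧
    ν + 1 ≤ p.1 + p.2 ∧ p.1 + p.2 < 2 ∧
    |p.1 - p.2| <
      min (2 - p.1 - p.2) (Real.sqrt (rK K (p.1 + p.2 - 1) / (p.1 + p.2 - 1)))}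

theorem stmt_15 (K : ℝ) (hK0 : 0 < K) (hK1 : K < 1) (ν : ℝ)
    (hν : 0 < ν ∧ rK K ν = 0)
    (hνu : ∀ t : ℝ, 0 < t → rK K t = 0 → t = ν)
    (lam mu : ℝ) (hlam : lam ∈ Set.Ioo (0 : ℝ) 1) (hmu : mu ∈ Set.Ioo (0 : ℝ) 1)
    (hsum : 1 < lam + mu) :
    (lam, mu) ∈ Theta K ν ↔
      K / (lam + mu - 1) - (1 - lam) * (1 - mu) < lam * mu := by
  obtain ⟨hl0, hl1⟩ := hlam
  obtain ⟨hm0, hm1⟩ := hmu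
  obtain ⟨hν0, hνr⟩ := hν
  have hs0 : (0:ℝ) < lam + mu - 1 := by linarith
  constructor
  · rintro ⟨_, _, hle, hlt, habs⟩
    have h2 : |lam - mu| < Real.sqrt (rK K (lam + mu - 1) / (lam + mu - 1)) :=
      lt_of_lt_of_le habs (min_le_right _ _)
    have hsq : 0 < Real.sqrt (rK K (lam + mu - 1) / (lam + mu - 1)) :=
      lt_of_le_of_lt (abs_nonneg _) h2
    have hpos : 0 < rK K (lam + mu - 1) / (lam + mu - 1) := Real.sqrt_pos.mp hsq
    have hb : (lam - mu) ^ 2 < rK K (lam + mu - 1) / (lam + mu - 1) := by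
      calc (lam - mu) ^ 2 = |lam - mu| ^ 2 := (sq_abs _).symm
        _ < Real.sqrt (rK K (lam + mu - 1) / (lam + mu - 1)) ^ 2 :=
            pow_lt_pow_left₀ h2 (abs_nonneg _) two_ne_zero
        _ = _ := Real.sq_sqrt hpos.le
    rw [lt_div_iff₀ hs0] at hb
    simp only [rK] at hb
    rw [sub_lt_iff_lt_add, div_lt_iff₀ hs0]
    nlinarith
  · intro h
    rw [sub_lt_iff_lt_add, div_lt_iff₀ hs0] at h
    have hb : (lam - mu) ^ 2 < rK K (lam + mu - 1) / (lam + mu - 1) := by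
      rw [lt_div_iff₀ hs0]
      simp only [rK]
      nlinarith
    have hpos : 0 < rK K (lam + mu - 1) := by
      have := lt_of_le_of_lt (sq_nonneg (lam - mu)) hb
      have := (div_pos_iff.mp this)
      rcases this with ⟨h1, _⟩ | ⟨_, h2⟩
      · exact h1
      · linarith
    have hsν : ν < lam + mu - 1 := by
      by_contra hc
      push_neg at hc
      have : rK K (lam + mu - 1) ≤ 0 := by
        simp only [rK] at hνr ⊢
        nlinarith [sq_nonneg (lam + mu - 1), sq_nonneg ν, mul_pos hs0 hν0,
          mul_nonneg (sub_nonneg.mpr hc) (mul_pos hs0 hν0).le]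
      linarith
    refine ⟨⟨hl0, hl1⟩, ⟨hm0, hm1⟩, by linarith, by linarith, ?_⟩
    rw [lt_min_iff]
    constructor
    · rw [abs_lt]; constructor <;> linarith
    · rw [Real.lt_sqrt (abs_nonneg _), sq_abs]
      exact hb
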